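/- arXiv:1202.6229 — 4 statements merged into one kernel-verified Lean document; each statement's English description precedes it below -/
import Mathlib

section
/- The number of standard Young tableaux of the rectangular shape (n,n,n) (three rows of length n) equals 2·(3n)!/(n!·(n+1)!·(n+2)!). -/
/-- The set of cells of the Young diagram with row lengths `L`:
`(i, j)` is a cell iff `j < L[i]`. -/
def cells (L : List ℕ) : Finset (ℕ × ℕ) :=
  (Finset.range L.length ×ˢ Finset.range (L.foldr max 0)).filter
    (fun p => p.2 < L.getD p.1 0)

/-- `f` is a standard Young tableau of shape `L`: a bijective filling of the cells
with `1,…,n` (modeled as `Fin L.sum`), strictly increasing along each row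
(left-to-right) and each column (top-to-bottom). -/
def IsSYT (L : List ℕ) (f : cells L → Fin L.sum) : Prop :=
  Function.Bijective f ∧
  (∀ a b : cells L, (↑a : ℕ × ℕ).1 = (↑b : ℕ × ℕ).1 →
      (↑a : ℕ × ℕ).2 < (↑b : ℕ × ℕ).2 → f a < f b) ∧
  (∀ a b : cells L, (↑a : ℕ × ℕ).2 = (↑b : ℕ × ℕ).2 →
      (↑a : ℕ × ℕ).1 < (↑b : ℕ × ℕ).1 → f a < f b)

/-- The number of standard Young tableaux of shape `L`. -/
noncomputable def sytCount (L : List ℕ) : ℕ := Nat.card {f : cells L → Fin L.sum // IsSYT L f}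

/-!
Recording, for each entry `k` of a standard Young tableau of a partition shape `λ`, the row
that contains `k` is a bijection onto the lattice words of content `λ`: the words in which every
prefix contains at least as many letters `i` as letters `i'` whenever `i < i'`. The inverse puts
the position of the `j`-th occurrence of the letter `i` into the cell `(i, j)`.

Sorting three-letter lattice words by their last letter gives the recurrence
`W(a, b, c) = W(a - 1, b, c) + W(a, b - 1, c) + W(a, b, c - 1)`, which is also satisfied by the
hook-length expression `(a + b + c)! (a - b + 1) (b - c + 1) (a - c + 2) / ((a + 2)! (b + 1)! c!)`;
this expression vanishes at `b = a + 1` and at `c = b + 1`, exactly where `W` does. At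
`a = b = c = n` it equals `2 (3n)! / (n! (n + 1)! (n + 2)!)`.
-/

open Finset

namespace Nat

variable {p : ℕ → Prop} [DecidablePred p] {j n : ℕ}

theorem lt_card_toFinset_of_lt_count (h : j < count p n) (hf : (Set.ofPred p).Finite) :
    j < #hf.toFinset :=
  h.trans_le (count_le_card hf n)

theorem nth_mem_of_lt_count (h : j < count p n) : p (nth p j) :=
  nth_mem j fun hf => lt_card_toFinset_of_lt_count h hf

theorem count_nth_of_lt_count (h : j < count p n) : count p (nth p j) = j :=
  count_nth fun hf => lt_card_toFinset_of_lt_count h hf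

theorem nth_lt_nth_of_lt_count {i : ℕ} (hij : i < j) (h : j < count p n) : nth p i < nth p j :=
  nth_lt_nth' hij fun hf => lt_card_toFinset_of_lt_count h hf

theorem count_congr_of_lt {q : ℕ → Prop} [DecidablePred q] (h : ∀ k < n, p k ↔ q k) :
    count p n = count q n :=
  le_antisymm (count_mono_left fun k hk => (h k hk).1) (count_mono_left fun k hk => (h k hk).2)

end Nat

theorem add_single_one_eq_iff {ι : Type*} [DecidableEq ι] {c x : ι → ℕ} {a : ι} :
    x + Pi.single a 1 = c ↔ x = c - Pi.single a 1 ∧ 0 < c a := by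
  constructor
  · rintro rfl
    simp
  · rintro ⟨rfl, ha⟩
    ext b
    by_cases hb : b = a
    · subst hb
      simp only [Pi.add_apply, Pi.sub_apply, Pi.single_eq_same]
      omega
    · simp [hb]

section Words

variable {α : Type*} {N : ℕ}

/-- Positions are taken in `ℕ` so that `Nat.count` and `Nat.nth` apply to them. -/
def OccursAt (w : Fin N → α) (a : α) (l : ℕ) : Prop := ∃ h : l < N, w ⟨l, h⟩ = a

theorem occursAt_coe_iff {w : Fin N → α} {a : α} {l : Fin N} : OccursAt w a l ↔ w l = a :=
  ⟨fun ⟨_, h⟩ => h, fun h => ⟨l.2, h⟩⟩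

theorem OccursAt.lt {w : Fin N → α} {a : α} {l : ℕ} (h : OccursAt w a l) : l < N := h.1

theorem OccursAt.unique {w : Fin N → α} {a b : α} {l : ℕ} (ha : OccursAt w a l)
    (hb : OccursAt w b l) : a = b := by
  obtain ⟨_, rfl⟩ := ha
  obtain ⟨_, rfl⟩ := hb
  rfl

theorem occursAt_snoc_iff_of_lt {v : Fin N → α} {a b : α} {l : ℕ} (hl : l < N) :
    OccursAt (Fin.snoc v a : Fin (N + 1) → α) b l ↔ OccursAt v b l := by
  simp [OccursAt, Fin.snoc, hl, hl.trans (Nat.lt_succ_self N)]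

theorem occursAt_snoc_self_iff {v : Fin N → α} {a b : α} :
    OccursAt (Fin.snoc v a : Fin (N + 1) → α) b N ↔ a = b := by
  simp [OccursAt, Fin.snoc]

variable [DecidableEq α]

instance (w : Fin N → α) (a : α) : DecidablePred (OccursAt w a) :=
  fun _ => inferInstanceAs (Decidable (∃ _, _))

def content (w : Fin N → α) (a : α) : ℕ := Nat.count (OccursAt w a) N

theorem count_occursAt_snoc_of_le {v : Fin N → α} {a b : α} {k : ℕ} (hk : k ≤ N) :
    Nat.count (OccursAt (Fin.snoc v a : Fin (N + 1) → α) b) k = Nat.count (OccursAt v b) k :=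
  Nat.count_congr_of_lt fun _ hl => occursAt_snoc_iff_of_lt (hl.trans_le hk)

theorem content_snoc (v : Fin N → α) (a : α) :
    content (Fin.snoc v a : Fin (N + 1) → α) = content v + Pi.single a 1 := by
  ext b
  simp only [content, Nat.count_succ, count_occursAt_snoc_of_le le_rfl, occursAt_snoc_self_iff,
    Pi.add_apply, Pi.single_apply, eq_comm]

end Words

section LatticeWords

variable {m N : ℕ}

def IsLatticeWord (w : Fin N → Fin m) : Prop :=
  ∀ k ≤ N, Antitone fun a => Nat.count (OccursAt w a) k

theorem IsLatticeWord.antitone_content {w : Fin N → Fin m} (hw : IsLatticeWord w) :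
    Antitone (content w) :=
  hw N le_rfl

theorem isLatticeWord_snoc_iff {v : Fin N → Fin m} {a : Fin m} :
    IsLatticeWord (Fin.snoc v a : Fin (N + 1) → Fin m) ↔
      IsLatticeWord v ∧ Antitone (content v + Pi.single a 1) := by
  rw [← content_snoc]
  refine ⟨fun h => ⟨fun k hk => ?_, h (N + 1) le_rfl⟩, fun ⟨hv, hN⟩ k hk => ?_⟩
  · simpa only [count_occursAt_snoc_of_le hk] using h k (hk.trans N.le_succ)
  · rcases hk.lt_or_eq with hk | rfl
    · have hk := Nat.lt_succ_iff.1 hk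
      simpa only [count_occursAt_snoc_of_le hk] using hv k hk
    · exact hN

noncomputable def latticeWordCount (N : ℕ) (c : Fin m → ℕ) : ℕ :=
  Nat.card {w : Fin N → Fin m // IsLatticeWord w ∧ content w = c}

theorem latticeWordCount_eq_zero {c : Fin m → ℕ} (hc : ¬Antitone c) :
    latticeWordCount N c = 0 := by
  rw [latticeWordCount, Nat.card_eq_zero]
  exact .inl ⟨fun ⟨w, hw, hwc⟩ => hc (hwc ▸ hw.antitone_content)⟩

theorem latticeWordCount_zero : latticeWordCount 0 (0 : Fin m → ℕ) = 1 := by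
  rw [latticeWordCount, Nat.card_eq_one_iff_unique]
  refine ⟨⟨fun _ _ => Subtype.ext (funext fun i => i.elim0)⟩, ⟨⟨Fin.elim0, fun k hk => ?_, ?_⟩⟩⟩
  · simp [Nat.le_zero.1 hk, antitone_const]
  · ext
    simp [content]

theorem latticeWordCount_succ {c : Fin m → ℕ} (hc : Antitone c) :
    latticeWordCount (N + 1) c =
      ∑ a, if 0 < c a then latticeWordCount N (c - Pi.single a 1) else 0 := by
  let P : (Fin (N + 1) → Fin m) → Prop := fun w => IsLatticeWord w ∧ content w = c
  have e : {w // P w} ≃ Σ a, {v : Fin N → Fin m // P (Fin.snoc v a)} :=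
    ((Fin.snocEquiv _).subtypeEquiv fun _ => Iff.rfl).symm.trans
      (Equiv.subtypeProdEquivSigmaSubtype fun a v => P (Fin.snoc v a))
  rw [latticeWordCount, Nat.card_congr e, Nat.card_sigma]
  refine Finset.sum_congr rfl fun a _ => ?_
  have hP : ∀ v : Fin N → Fin m, P (Fin.snoc v a) ↔
      IsLatticeWord v ∧ content v = c - Pi.single a 1 ∧ 0 < c a := by
    intro v
    rw [← add_single_one_eq_iff]
    simp only [P, isLatticeWord_snoc_iff, content_snoc]
    exact ⟨fun ⟨⟨hv, _⟩, h⟩ => ⟨hv, h⟩, fun ⟨hv, h⟩ => ⟨⟨hv, h ▸ hc⟩, h⟩⟩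
  split_ifs with ha
  · exact Nat.card_congr (Equiv.subtypeEquivRight fun v => by simp only [hP, ha, and_true])
  · simp [hP, ha]

end LatticeWords

section ThreeLetters

open scoped Nat

variable {N a b c : ℕ}

theorem antitone_vec_three_iff : Antitone ![a, b, c] ↔ b ≤ a ∧ c ≤ b := by
  simp [Fin.antitone_iff_succ_le, Fin.forall_fin_two]

theorem latticeWordCount_three_succ (h : b ≤ a ∧ c ≤ b) :
    latticeWordCount (N + 1) ![a, b, c] =
      (if 0 < a then latticeWordCount N ![a - 1, b, c] else 0) +
      (if 0 < b then latticeWordCount N ![a, b - 1, c] else 0) +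
      (if 0 < c then latticeWordCount N ![a, b, c - 1] else 0) := by
  rw [latticeWordCount_succ (antitone_vec_three_iff.2 h), Fin.sum_univ_three]
  have h0 : (![a, b, c] - Pi.single 0 1 : Fin 3 → ℕ) = ![a - 1, b, c] := by
    ext i; fin_cases i <;> simp
  have h1 : (![a, b, c] - Pi.single 1 1 : Fin 3 → ℕ) = ![a, b - 1, c] := by
    ext i; fin_cases i <;> simp
  have h2 : (![a, b, c] - Pi.single 2 1 : Fin 3 → ℕ) = ![a, b, c - 1] := by
    ext i; fin_cases i <;> simp
  simp [h0, h1, h2]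

theorem three_row_hook_identity (a b c : ℤ) :
    (a + 2) * ((a - b) * (b - c + 1) * (a - c + 1)) +
        (b + 1) * ((a - b + 2) * (b - c) * (a - c + 2)) +
        c * ((a - b + 1) * (b - c + 2) * (a - c + 3)) =
      (a + b + c) * ((a - b + 1) * (b - c + 1) * (a - c + 2)) := by
  ring

/-- Stated also for `b = a + 1` and `c = b + 1`, where both sides vanish, so that the recurrence
needs no boundary cases. -/
def ThreeRowFormula (N : ℕ) : Prop :=
  ∀ a b c : ℕ, a + b + c = N → b ≤ a + 1 → c ≤ b + 1 →
    (latticeWordCount N ![a, b, c] : ℤ) * ((a + 2)! * (b + 1)! * c !) =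
      N ! * ((a - b + 1) * (b - c + 1) * (a - c + 2))

theorem threeRowFormula_succ (ih : ThreeRowFormula N) (hN : a + 1 + b + c = N + 1)
    (hmono : b ≤ a + 1 ∧ c ≤ b) :
    (latticeWordCount (N + 1) ![a + 1, b, c] : ℤ) * ((a + 1 + 2)! * (b + 1)! * c !) =
      (N + 1)! * ((a + 1 - b + 1) * (b - c + 1) * (a + 1 - c + 2)) := by
  have hA := ih a b c (by omega) (by omega) (by omega)
  have hB : ((if 0 < b then latticeWordCount N ![a + 1, b - 1, c] else 0 : ℕ) : ℤ) *
      ((a + 1 + 2)! * (b + 1)! * c !) =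
        (b + 1) * (N ! * ((a + 1 - b + 2) * (b - c) * (a + 1 - c + 2))) := by
    rcases b with _ | b
    · obtain rfl : c = 0 := by omega
      simp
    · have := ih (a + 1) b c (by omega) (by omega) (by omega)
      rw [if_pos b.succ_pos, Nat.add_sub_cancel, Nat.factorial_succ (b + 1)]
      push_cast at this ⊢
      linear_combination (b + 2 : ℤ) * this
  have hC : ((if 0 < c then latticeWordCount N ![a + 1, b, c - 1] else 0 : ℕ) : ℤ) *
      ((a + 1 + 2)! * (b + 1)! * c !) =
        c * (N ! * ((a + 1 - b + 1) * (b - c + 2) * (a + 1 - c + 3))) := by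
    rcases c with _ | c
    · simp
    · have := ih (a + 1) b c (by omega) (by omega) (by omega)
      rw [if_pos c.succ_pos, Nat.add_sub_cancel, Nat.factorial_succ c]
      push_cast at this ⊢
      linear_combination (c + 1 : ℤ) * this
  have hfa : ((a + 1 + 2)! : ℤ) = (a + 3) * (a + 2)! := by
    rw [show a + 1 + 2 = a + 2 + 1 from rfl, Nat.factorial_succ]
    push_cast
    ring
  have hN' : (N : ℤ) + 1 = a + 1 + b + c := by omega
  rw [latticeWordCount_three_succ hmono, if_pos a.succ_pos, Nat.add_sub_cancel,
    Nat.factorial_succ N]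
  push_cast at hA hB hC ⊢
  rw [hfa] at hB hC ⊢
  linear_combination (a + 3 : ℤ) * hA + hB + hC + (N ! : ℤ) * three_row_hook_identity (a + 1) b c
    - (N ! * ((a + 1 - b + 1) * (b - c + 1) * (a + 1 - c + 2)) : ℤ) * hN'

theorem threeRowFormula (N : ℕ) : ThreeRowFormula N := by
  induction N with
  | zero =>
    intro a b c h _ _
    obtain ⟨rfl, rfl, rfl⟩ : a = 0 ∧ b = 0 ∧ c = 0 := by omega
    have h0 : (![0, 0, 0] : Fin 3 → ℕ) = 0 := by
      ext i; fin_cases i <;> rfl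
    simp [h0, latticeWordCount_zero]
  | succ N ih =>
    intro a b c hN hab hbc
    by_cases hmono : b ≤ a ∧ c ≤ b
    · obtain ⟨a, rfl⟩ : ∃ a', a = a' + 1 := ⟨a - 1, by omega⟩
      exact threeRowFormula_succ ih hN hmono
    · rw [latticeWordCount_eq_zero (mt antitone_vec_three_iff.1 hmono)]
      rcases (by omega : b = a + 1 ∨ c = b + 1) with rfl | rfl <;> push_cast <;> ring

end ThreeLetters

section Cells

variable {L : List ℕ}

theorem mem_cells {p : ℕ × ℕ} : p ∈ cells L ↔ ∃ h : p.1 < L.length, p.2 < L[p.1] := by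
  simp only [cells, mem_filter, mem_product, mem_range]
  constructor
  · rintro ⟨-, h⟩
    have hlen : p.1 < L.length := by
      by_contra! h'
      rw [List.getD_eq_default _ _ h'] at h
      exact Nat.not_lt_zero _ h
    rw [List.getD_eq_getElem _ _ hlen] at h
    exact ⟨hlen, h⟩
  · rintro ⟨hlen, h⟩
    rw [List.getD_eq_getElem _ _ hlen]
    exact ⟨⟨hlen, h.trans_le (List.le_max_of_le' 0 (List.getElem_mem hlen) le_rfl)⟩, h⟩

def cellRow (c : cells L) : Fin L.length :=
  ⟨c.1.1, (mem_cells.1 c.2).1⟩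

theorem col_lt_get_cellRow (c : cells L) : c.1.2 < L.get (cellRow c) :=
  (mem_cells.1 c.2).2

def mkCell (i : Fin L.length) (j : ℕ) (hj : j < L.get i) : cells L :=
  ⟨(i, j), mem_cells.2 ⟨i.2, hj⟩⟩

theorem cell_ext {c c' : cells L} (hrow : cellRow c = cellRow c') (hcol : c.1.2 = c'.1.2) :
    c = c' :=
  Subtype.ext (Prod.ext (congrArg Fin.val hrow) hcol)

theorem card_cells_row_col_lt (i : Fin L.length) {j : ℕ} (hj : j ≤ L.get i) :
    #{c : cells L | cellRow c = i ∧ c.1.2 < j} = j := by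
  conv_rhs => rw [← card_range j]
  refine card_bij (fun c _ => c.1.2) (fun c hc => by simpa using (mem_filter.1 hc).2.2)
    (fun c hc c' hc' h => cell_ext ((mem_filter.1 hc).2.1.trans (mem_filter.1 hc').2.1.symm) h)
    fun j' hj' => ⟨mkCell i j' ((mem_range.1 hj').trans_le hj),
      mem_filter.2 ⟨mem_univ _, rfl, mem_range.1 hj'⟩, rfl⟩

end Cells

section RowWord

variable {L : List ℕ} {f : cells L → Fin L.sum}

noncomputable def rowWord (hf : Function.Bijective f) : Fin L.sum → Fin L.length :=
  fun k => cellRow ((Equiv.ofBijective f hf).symm k)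

theorem rowWord_apply (hf : Function.Bijective f) (c : cells L) : rowWord hf (f c) = cellRow c :=
  congrArg cellRow ((Equiv.ofBijective f hf).symm_apply_apply c)

theorem count_occursAt_rowWord (hf : Function.Bijective f) (i : Fin L.length) (k : ℕ) :
    Nat.count (OccursAt (rowWord hf) i) k = #{c : cells L | cellRow c = i ∧ (f c : ℕ) < k} := by
  rw [Nat.count_eq_card_filter_range]
  symm
  refine card_bij (fun c _ => (f c : ℕ)) (fun c hc => ?_)
    (fun c _ c' _ h => hf.1 (Fin.ext h)) (fun l hl => ?_)
  · obtain ⟨-, hrow, hlt⟩ := mem_filter.1 hc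
    exact mem_filter.2 ⟨mem_range.2 hlt, occursAt_coe_iff.2 (by rw [rowWord_apply, hrow])⟩
  · obtain ⟨hlk, hl, hrow⟩ := mem_filter.1 hl
    obtain ⟨c, hc⟩ := hf.2 ⟨l, hl⟩
    refine ⟨c, mem_filter.2 ⟨mem_univ _, ?_, ?_⟩, by rw [hc]⟩
    · rw [← rowWord_apply hf, hc, hrow]
    · rw [hc]
      exact mem_range.1 hlk

theorem content_rowWord (hf : Function.Bijective f) : content (rowWord hf) = L.get := by
  ext i
  rw [content, count_occursAt_rowWord, ← card_cells_row_col_lt i le_rfl]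
  congr 1
  ext c
  simp only [mem_filter, mem_univ, true_and, and_congr_right_iff]
  rintro rfl
  simp only [Fin.is_lt, true_iff]
  exact col_lt_get_cellRow c

theorem count_occursAt_rowWord_apply (hf : IsSYT L f) (c : cells L) :
    Nat.count (OccursAt (rowWord hf.1) (cellRow c)) (f c) = c.1.2 := by
  rw [count_occursAt_rowWord, ← card_cells_row_col_lt (cellRow c) (col_lt_get_cellRow c).le]
  congr 1
  ext c'
  simp only [mem_filter, mem_univ, true_and, and_congr_right_iff]
  intro hrow
  have hrow' : c'.1.1 = c.1.1 := congrArg Fin.val hrow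
  refine ⟨fun hlt => ?_, fun hlt => hf.2.1 c' c hrow' hlt⟩
  by_contra! hle
  rcases hle.lt_or_eq with hlt' | heq
  · exact (hf.2.1 c c' hrow'.symm hlt').not_gt hlt
  · exact hlt.ne (by rw [cell_ext hrow heq.symm])

/-- Moving each cell of row `i'` up to row `i ≤ i'` decreases its entry, which injects the
entries of row `i'` below `k` into those of row `i`. -/
theorem isLatticeWord_rowWord (hL : L.SortedGE) (hf : IsSYT L f) :
    IsLatticeWord (rowWord hf.1) := by
  intro k _ i i' hii'
  simp only [count_occursAt_rowWord]
  have hlen : ∀ c : cells L, cellRow c = i' → c.1.2 < L.get i := fun c hc =>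
    (col_lt_get_cellRow c).trans_le (hc ▸ hL.antitone_get hii')
  refine card_le_card_of_injOn (fun c => if hc : cellRow c = i' then mkCell i c.1.2 (hlen c hc)
    else c) (fun c hc => ?_) (fun c hc c' hc' h => ?_)
  · obtain ⟨-, hrow, hlt⟩ := mem_filter.1 (mem_coe.1 hc)
    dsimp only
    rw [dif_pos hrow]
    refine mem_coe.2 (mem_filter.2 ⟨mem_univ _, rfl, lt_of_le_of_lt ?_ hlt⟩)
    rcases hii'.lt_or_eq with h | rfl
    · subst hrow
      exact (hf.2.2 (mkCell i c.1.2 (hlen c rfl)) c rfl h).le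
    · exact (congrArg f (cell_ext (c := mkCell i c.1.2 (hlen c hrow)) hrow.symm rfl)).le
  · obtain ⟨-, hrow, -⟩ := mem_filter.1 (mem_coe.1 hc)
    obtain ⟨-, hrow', -⟩ := mem_filter.1 (mem_coe.1 hc')
    simp only [dif_pos hrow, dif_pos hrow'] at h
    have hcol := congrArg (fun c : cells L => c.1.2) h
    exact cell_ext (hrow.trans hrow'.symm) hcol

end RowWord

section TableauOfWord

variable {L : List ℕ} {w : Fin L.sum → Fin L.length}

theorem lt_count_occursAt_cellRow (hw : content w = L.get) (c : cells L) :
    c.1.2 < Nat.count (OccursAt w (cellRow c)) L.sum :=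
  (col_lt_get_cellRow c).trans_eq (congrFun hw _).symm

noncomputable def tableauOfWord (hw : content w = L.get) (c : cells L) : Fin L.sum :=
  ⟨Nat.nth (OccursAt w (cellRow c)) c.1.2,
    (Nat.nth_mem_of_lt_count (lt_count_occursAt_cellRow hw c)).lt⟩

theorem occursAt_tableauOfWord (hw : content w = L.get) (c : cells L) :
    OccursAt w (cellRow c) (tableauOfWord hw c) :=
  Nat.nth_mem_of_lt_count (lt_count_occursAt_cellRow hw c)

theorem count_occursAt_tableauOfWord (hw : content w = L.get) (c : cells L) :
    Nat.count (OccursAt w (cellRow c)) (tableauOfWord hw c) = c.1.2 :=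
  Nat.count_nth_of_lt_count (lt_count_occursAt_cellRow hw c)

theorem tableauOfWord_injective (hw : content w = L.get) :
    Function.Injective (tableauOfWord hw) := by
  intro c c' h
  have hrow : cellRow c = cellRow c' :=
    (occursAt_tableauOfWord hw c).unique (h ▸ occursAt_tableauOfWord hw c')
  refine cell_ext hrow ?_
  rw [← count_occursAt_tableauOfWord hw c, ← count_occursAt_tableauOfWord hw c', h, hrow]

theorem tableauOfWord_surjective (hw : content w = L.get) :
    Function.Surjective (tableauOfWord hw) := by
  intro k
  have hk : OccursAt w (w k) k := occursAt_coe_iff.2 rfl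
  have hcol : Nat.count (OccursAt w (w k)) k < L.get (w k) :=
    (Nat.count_strict_mono hk k.2).trans_eq (congrFun hw _)
  exact ⟨mkCell (w k) _ hcol, Fin.ext (Nat.nth_count hk)⟩

/-- The prefix ending at the `j`-th occurrence of the lower row's letter contains `j + 1` copies
of it, hence at least `j + 1` copies of the upper row's letter. -/
theorem tableauOfWord_lt_of_cellRow_lt (hl : IsLatticeWord w) (hw : content w = L.get)
    {c c' : cells L} (hcol : c.1.2 = c'.1.2) (hrow : cellRow c < cellRow c') :
    tableauOfWord hw c < tableauOfWord hw c' := by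
  set x := (tableauOfWord hw c' : ℕ)
  have hx : Nat.count (OccursAt w (cellRow c')) (x + 1) = c.1.2 + 1 := by
    rw [Nat.count_succ, count_occursAt_tableauOfWord, if_pos (occursAt_tableauOfWord hw c'), hcol]
  have hlt : c.1.2 < Nat.count (OccursAt w (cellRow c)) (x + 1) := by
    have := hl (x + 1) (tableauOfWord hw c').2 hrow.le
    simp only at this
    omega
  refine Fin.lt_def.2 (lt_of_le_of_ne (Nat.lt_succ_iff.1 (Nat.nth_lt_of_lt_count hlt)) ?_)
  intro heq
  exact hrow.ne ((occursAt_tableauOfWord hw c).unique (heq ▸ occursAt_tableauOfWord hw c'))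

theorem isSYT_tableauOfWord (hl : IsLatticeWord w) (hw : content w = L.get) :
    IsSYT L (tableauOfWord hw) := by
  refine ⟨⟨tableauOfWord_injective hw, tableauOfWord_surjective hw⟩, fun c c' hrow hcol => ?_,
    fun c c' hcol hrow => tableauOfWord_lt_of_cellRow_lt hl hw hcol hrow⟩
  have hrow : cellRow c = cellRow c' := Fin.ext hrow
  change Nat.nth (OccursAt w (cellRow c)) c.1.2 < Nat.nth (OccursAt w (cellRow c')) c'.1.2
  rw [hrow]
  exact Nat.nth_lt_nth_of_lt_count hcol (lt_count_occursAt_cellRow hw c')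

theorem rowWord_tableauOfWord (hl : IsLatticeWord w) (hw : content w = L.get) :
    rowWord (isSYT_tableauOfWord hl hw).1 = w := by
  funext k
  obtain ⟨c, rfl⟩ := tableauOfWord_surjective hw k
  rw [rowWord_apply, occursAt_coe_iff.1 (occursAt_tableauOfWord hw c)]

end TableauOfWord

theorem tableauOfWord_rowWord {L : List ℕ} {f : cells L → Fin L.sum} (hf : IsSYT L f) :
    tableauOfWord (content_rowWord hf.1) = f := by
  funext c
  refine Fin.ext ?_
  conv_rhs => rw [← Nat.nth_count (occursAt_coe_iff.2 (rowWord_apply hf.1 c))]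
  rw [count_occursAt_rowWord_apply hf c]
  rfl

noncomputable def sytEquivLatticeWords {L : List ℕ} (hL : L.SortedGE) :
    {f : cells L → Fin L.sum // IsSYT L f} ≃
      {w : Fin L.sum → Fin L.length // IsLatticeWord w ∧ content w = L.get} where
  toFun f := ⟨rowWord f.2.1, isLatticeWord_rowWord hL f.2, content_rowWord f.2.1⟩
  invFun w := ⟨tableauOfWord w.2.2, isSYT_tableauOfWord w.2.1 w.2.2⟩
  left_inv f := Subtype.ext (tableauOfWord_rowWord f.2)
  right_inv w := Subtype.ext (rowWord_tableauOfWord w.2.1 w.2.2)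

theorem sytCount_eq_latticeWordCount {L : List ℕ} (hL : L.SortedGE) :
    sytCount L = latticeWordCount L.sum L.get :=
  Nat.card_congr (sytEquivLatticeWords hL)

open scoped Nat in
theorem sytCount_three_rows {a b c : ℕ} (hab : b ≤ a) (hbc : c ≤ b) :
    sytCount [a, b, c] * ((a + 2)! * (b + 1)! * c !) =
      (a + b + c)! * ((a - b + 1) * (b - c + 1) * (a - c + 2)) := by
  have hL : [a, b, c].SortedGE := List.sortedGE_iff_pairwise.2 (by simp; omega)
  have hsum : [a, b, c].sum = a + b + c := by simp [add_assoc]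
  have hget : ([a, b, c].get : Fin 3 → ℕ) = ![a, b, c] := by
    ext i; fin_cases i <;> rfl
  have hcount : sytCount [a, b, c] = latticeWordCount (a + b + c) ![a, b, c] := by
    rw [sytCount_eq_latticeWordCount hL]
    change latticeWordCount (m := 3) [a, b, c].sum [a, b, c].get = _
    rw [hsum, hget]
  rw [hcount]
  zify [hab, hbc, hbc.trans hab]
  exact threeRowFormula _ a b c rfl (by omega) (by omega)

/-- The number of standard Young tableaux of shape (n,n,n) equals
`2·(3n)!/(n!·(n+1)!·(n+2)!)`. -/
theorem syt_three_row_eq_3dCatalan (n : ℕ) :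
    sytCount [n, n, n] =
      2 * Nat.factorial (3 * n) /
        (Nat.factorial n * Nat.factorial (n + 1) * Nat.factorial (n + 2)) := by
  have h := sytCount_three_rows (le_refl n) (le_refl n)
  simp only [Nat.sub_self, zero_add] at h
  refine (Nat.div_eq_of_eq_mul_left (by positivity) ?_).symm
  rw [show 3 * n = n + n + n by ring]
  linarith
end

section
/- The number of lattice paths from (0,0,0) to (n,n,n) using unit steps in the positive coordinate directions, such that every visited point (x,y,z) satisfies x ≥ y ≥ z, equals 2·(3n)!/(n!·(n+1)!·(n+2)!). -/
/-!
A path is a word in the letters `0, 1, 2` all of whose prefixes have antitone letter counts,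
i.e. a ballot (Yamanouchi) word. Classifying ballot words by their content `(a, b, c)` and
removing the last letter gives a Pascal-type recurrence. The hook length expression
`(a+b+c)! (a-b+1) (b-c+1) (a-c+2) / ((a+2)! (b+1)! c!)` satisfies the same recurrence and
vanishes where `b = a + 1` or `c = b + 1`, so the two agree by induction on the length. At
`(n, n, n)` the expression is `2 (3n)! / (n! (n+1)! (n+2)!)`.
-/

/-- For a word `w` of steps (each step increasing one of `d` coordinates by 1),
`cnt w i j` is the value of coordinate `j` after the first `i` steps, i.e. the
number of steps among the first `i` that increase coordinate `j`. -/
def cnt {m d : ℕ} (w : Fin m → Fin d) (i : ℕ) (j : Fin d) : ℕ :=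
  (Finset.univ.filter (fun t : Fin m => (t : ℕ) < i ∧ w t = j)).card

open Nat

section Cnt

variable {m d : ℕ}

lemma cnt_of_le (w : Fin m → Fin d) {i : ℕ} (h : m ≤ i) : cnt w i = cnt w m := by
  ext j
  simp only [cnt, Fin.is_lt, true_and, lt_of_lt_of_le (Fin.is_lt _) h]

lemma cnt_snoc (w : Fin m → Fin d) (x : Fin d) (i : ℕ) (j : Fin d) :
    cnt (Fin.snoc w x : Fin (m + 1) → Fin d) i j = cnt w i j + if m < i ∧ x = j then 1 else 0 := by
  simp only [cnt, Finset.card_filter, Fin.sum_univ_castSucc, Fin.snoc_castSucc, Fin.snoc_last,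
    Fin.val_castSucc, Fin.val_last]

lemma cnt_snoc_of_le (w : Fin m → Fin d) (x : Fin d) {i : ℕ} (h : i ≤ m) :
    cnt (Fin.snoc w x : Fin (m + 1) → Fin d) i = cnt w i := by
  ext j
  simp [cnt_snoc, h.not_gt]

lemma cnt_snoc_self (w : Fin m → Fin d) (x : Fin d) :
    cnt (Fin.snoc w x : Fin (m + 1) → Fin d) (m + 1) = cnt w m + Pi.single x 1 := by
  ext j
  simp [cnt_snoc, cnt_of_le w m.le_succ, Pi.single_apply, eq_comm]

end Cnt

def IsBallotWord {m d : ℕ} (w : Fin m → Fin d) : Prop := ∀ i, Antitone (cnt w i)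

noncomputable def ballotCount (m : ℕ) {d : ℕ} (p : Fin d → ℕ) : ℕ :=
  Nat.card {w : Fin m → Fin d // IsBallotWord w ∧ cnt w m = p}

section Ballot

variable {m d : ℕ}

lemma ballotCount_zero : ballotCount 0 (0 : Fin d → ℕ) = 1 := by
  have hcnt (w : Fin 0 → Fin d) (i : ℕ) : cnt w i = 0 := by
    ext j
    simp [cnt]
  rw [ballotCount, Nat.card_eq_one_iff_exists]
  refine ⟨⟨Fin.elim0, fun i => hcnt _ i ▸ antitone_const, hcnt _ 0⟩, fun w => ?_⟩
  exact Subtype.ext (Subsingleton.elim _ _)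

lemma isBallotWord_snoc_iff (w : Fin m → Fin d) (x : Fin d) :
    IsBallotWord (Fin.snoc w x : Fin (m + 1) → Fin d) ↔
      IsBallotWord w ∧ Antitone (cnt w m + Pi.single x 1) := by
  refine ⟨fun h => ⟨fun i => ?_, cnt_snoc_self w x ▸ h (m + 1)⟩, fun ⟨hw, hx⟩ i => ?_⟩
  · rcases le_total i m with hi | hi
    · exact cnt_snoc_of_le w x hi ▸ h i
    · exact cnt_of_le w hi ▸ cnt_snoc_of_le w x le_rfl ▸ h m
  · rcases le_or_gt i m with hi | hi
    · exact cnt_snoc_of_le w x hi ▸ hw i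
    · exact (cnt_of_le _ hi).symm ▸ (cnt_snoc_self w x).symm ▸ hx

lemma ballotCount_eq_zero_of_not_antitone {p : Fin d → ℕ} (hp : ¬ Antitone p) :
    ballotCount m p = 0 := by
  rw [ballotCount, Nat.card_eq_zero]
  exact Or.inl ⟨fun ⟨w, hw, hwp⟩ => hp (hwp ▸ hw m)⟩

lemma card_ballot_add_single_eq (p : Fin d → ℕ) (x : Fin d) :
    Nat.card {w : Fin m → Fin d // IsBallotWord w ∧ cnt w m + Pi.single x 1 = p} =
      if p x = 0 then 0 else ballotCount m (p - Pi.single x 1) := by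
  split_ifs with hpx
  · rw [Nat.card_eq_zero]
    refine Or.inl ⟨fun ⟨w, _, hwp⟩ => ?_⟩
    have := congrFun hwp x
    simp_all
  · have hle : Pi.single x 1 ≤ p := by
      intro j
      by_cases hj : j = x
      · subst hj; simpa [Nat.one_le_iff_ne_zero] using hpx
      · simp [hj]
    simp only [ballotCount, eq_tsub_iff_add_eq_of_le hle]

lemma ballotCount_succ {p : Fin d → ℕ} (hp : Antitone p) :
    ballotCount (m + 1) p =
      ∑ x, if p x = 0 then 0 else ballotCount m (p - Pi.single x 1) := by
  simp only [← card_ballot_add_single_eq]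
  rw [← Nat.card_sigma, ballotCount]
  refine Nat.card_congr ((Equiv.subtypeProdEquivSigmaSubtype fun x w' =>
      IsBallotWord w' ∧ cnt w' m + Pi.single x 1 = p).symm.trans
    ((Fin.snocEquiv fun _ => Fin d).subtypeEquiv fun c => ?_)).symm
  change _ ↔ IsBallotWord (Fin.snoc c.2 c.1 : Fin (m + 1) → Fin d) ∧
    cnt (Fin.snoc c.2 c.1 : Fin (m + 1) → Fin d) (m + 1) = p
  rw [isBallotWord_snoc_iff, cnt_snoc_self]
  exact ⟨fun ⟨hw, hc⟩ => ⟨⟨hw, hc ▸ hp⟩, hc⟩, fun ⟨⟨hw, _⟩, hc⟩ => ⟨hw, hc⟩⟩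

end Ballot

lemma antitone_fin_three_iff {α : Type*} [Preorder α] (p : Fin 3 → α) :
    Antitone p ↔ p 1 ≤ p 0 ∧ p 2 ≤ p 1 := by
  simp [Fin.antitone_iff_succ_le, Fin.forall_fin_two]

lemma ballotCount_succ_three (m : ℕ) {a b c : ℕ} (hba : b ≤ a) (hcb : c ≤ b) :
    ballotCount (m + 1) ![a, b, c] =
      (if a = 0 then 0 else ballotCount m ![a - 1, b, c]) +
        (if b = 0 then 0 else ballotCount m ![a, b - 1, c]) +
        (if c = 0 then 0 else ballotCount m ![a, b, c - 1]) := by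
  have h0 : ![a, b, c] - Pi.single 0 1 = ![a - 1, b, c] := by ext j; fin_cases j <;> rfl
  have h1 : ![a, b, c] - Pi.single 1 1 = ![a, b - 1, c] := by ext j; fin_cases j <;> rfl
  have h2 : ![a, b, c] - Pi.single 2 1 = ![a, b, c - 1] := by ext j; fin_cases j <;> rfl
  rw [ballotCount_succ ((antitone_fin_three_iff _).2 ⟨hba, hcb⟩), Fin.sum_univ_three, h0, h1, h2]
  rfl

/-- The hook length formula for the number of standard Young tableaux of shape `(a, b, c)`,
whose reading words are the ballot words of content `(a, b, c)`. -/
noncomputable def hookLengthFormula (a b c : ℕ) : ℚ :=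
  (a + b + c)! * ((a : ℚ) - b + 1) * ((b : ℚ) - c + 1) * ((a : ℚ) - c + 2) /
    ((a + 2)! * (b + 1)! * c !)

lemma hookLengthFormula_zero : hookLengthFormula 0 0 0 = 1 := by
  norm_num [hookLengthFormula]

lemma hookLengthFormula_eq_zero {a b c : ℕ} (h : b = a + 1 ∨ c = b + 1) :
    hookLengthFormula a b c = 0 := by
  rcases h with rfl | rfl <;> simp [hookLengthFormula]

lemma hookLengthFormula_self (n : ℕ) :
    hookLengthFormula n n n = 2 * (3 * n)! / (n ! * (n + 1)! * (n + 2)!) := by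
  rw [hookLengthFormula, show n + n + n = 3 * n by ring]
  ring

lemma hookLengthFormula_succ_succ_succ (a b c : ℕ) :
    hookLengthFormula (a + 1) (b + 1) (c + 1) =
      hookLengthFormula a (b + 1) (c + 1) + hookLengthFormula (a + 1) b (c + 1) +
        hookLengthFormula (a + 1) (b + 1) c := by
  unfold hookLengthFormula
  rw [show a + 1 + (b + 1) + (c + 1) = a + b + c + 2 + 1 by ring,
    show a + (b + 1) + (c + 1) = a + b + c + 2 by ring,
    show a + 1 + b + (c + 1) = a + b + c + 2 by ring,
    show a + 1 + (b + 1) + c = a + b + c + 2 by ring, factorial_succ (a + b + c + 2),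
    factorial_succ (a + 1 + 1), factorial_succ (b + 1), factorial_succ c]
  push_cast
  field_simp
  ring

lemma hookLengthFormula_succ_succ_zero (a b : ℕ) :
    hookLengthFormula (a + 1) (b + 1) 0 =
      hookLengthFormula a (b + 1) 0 + hookLengthFormula (a + 1) b 0 := by
  unfold hookLengthFormula
  rw [show a + 1 + (b + 1) + 0 = a + b + 1 + 1 by ring, show a + (b + 1) + 0 = a + b + 1 by ring,
    show a + 1 + b + 0 = a + b + 1 by ring, factorial_succ (a + b + 1),
    factorial_succ (a + 1 + 1), factorial_succ (b + 1)]
  push_cast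
  field_simp
  ring

lemma hookLengthFormula_succ_zero_zero (a : ℕ) :
    hookLengthFormula (a + 1) 0 0 = hookLengthFormula a 0 0 := by
  simp only [hookLengthFormula, Nat.add_zero, factorial_succ]
  push_cast
  field_simp
  ring

lemma hookLengthFormula_eq_sum {a b c : ℕ} (hba : b ≤ a) (hcb : c ≤ b) (ha : a ≠ 0) :
    hookLengthFormula a b c =
      (if a = 0 then 0 else hookLengthFormula (a - 1) b c) +
        (if b = 0 then 0 else hookLengthFormula a (b - 1) c) +
        (if c = 0 then 0 else hookLengthFormula a b (c - 1)) := by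
  obtain ⟨a, rfl⟩ := exists_add_one_eq.2 (pos_of_ne_zero ha)
  rcases c with _ | c
  · rcases b with _ | b
    · simp [hookLengthFormula_succ_zero_zero]
    · simp [hookLengthFormula_succ_succ_zero]
  · obtain ⟨b, rfl⟩ := exists_add_one_eq.2 (lt_of_lt_of_le c.succ_pos hcb)
    simp [hookLengthFormula_succ_succ_succ]

/-- The range `b ≤ a + 1`, `c ≤ b + 1` is closed under removing a letter from a ballot content,
and on its non-ballot part both sides vanish. -/
theorem ballotCount_eq_hookLengthFormula (m : ℕ) :
    ∀ a b c, a + b + c = m → b ≤ a + 1 → c ≤ b + 1 →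
      (ballotCount m ![a, b, c] : ℚ) = hookLengthFormula a b c := by
  induction m with
  | zero =>
    intro a b c hm _ _
    obtain ⟨rfl, rfl, rfl⟩ : a = 0 ∧ b = 0 ∧ c = 0 := by omega
    rw [show ![0, 0, 0] = 0 by ext j; fin_cases j <;> rfl, ballotCount_zero,
      hookLengthFormula_zero, Nat.cast_one]
  | succ m ih =>
    intro a b c hm hb hc
    by_cases hbal : b ≤ a ∧ c ≤ b
    · rw [ballotCount_succ_three m hbal.1 hbal.2,
        hookLengthFormula_eq_sum hbal.1 hbal.2 (by omega)]
      push_cast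
      congr 1
      congr 1
      all_goals split_ifs
      all_goals first | rfl | exact ih _ _ _ (by omega) (by omega) (by omega)
    · rw [ballotCount_eq_zero_of_not_antitone (by rwa [antitone_fin_three_iff]),
        hookLengthFormula_eq_zero (by omega), Nat.cast_zero]

/-- The number of lattice paths from `(0,0,0)` to `(n,n,n)` with positive unit
steps such that every visited point `(x,y,z)` satisfies `x ≥ y ≥ z` equals
`2·(3n)!/(n!·(n+1)!·(n+2)!)`. -/
theorem lattice_paths_3d_catalan (n : ℕ) :
    Nat.card {w : Fin (3 * n) → Fin 3 //
        (∀ i : ℕ, cnt w i 1 ≤ cnt w i 0 ∧ cnt w i 2 ≤ cnt w i 1) ∧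
        (∀ j : Fin 3, cnt w (3 * n) j = n)} =
      2 * Nat.factorial (3 * n) /
        (Nat.factorial n * Nat.factorial (n + 1) * Nat.factorial (n + 2)) := by
  have hpaths : Nat.card {w : Fin (3 * n) → Fin 3 //
        (∀ i : ℕ, cnt w i 1 ≤ cnt w i 0 ∧ cnt w i 2 ≤ cnt w i 1) ∧
        (∀ j : Fin 3, cnt w (3 * n) j = n)} = ballotCount (3 * n) ![n, n, n] := by
    refine Nat.card_congr (Equiv.subtypeEquivRight fun w => and_congr ?_ ?_)
    · simp only [IsBallotWord, antitone_fin_three_iff]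
    · simp [funext_iff, Fin.forall_fin_succ]
  have hq : (ballotCount (3 * n) ![n, n, n] : ℚ) = 2 * (3 * n)! / (n ! * (n + 1)! * (n + 2)!) := by
    rw [ballotCount_eq_hookLengthFormula _ n n n (by ring) n.le_succ n.le_succ,
      hookLengthFormula_self]
  have hD : 0 < n ! * (n + 1)! * (n + 2)! := by positivity
  rw [eq_div_iff (by positivity)] at hq
  rw [hpaths, Nat.div_eq_of_eq_mul_left hD (by exact_mod_cast hq.symm)]
end

section
/- The number of solid standard Young tableaux of the cylindrical shape (2,1)×{1,...,n} (i.e., the down-closed subset {(i,j,k) : (i,j) ∈ diagram of (2,1), 0 ≤ k < n} of ℕ³) equals the number of lattice paths from (0,0,0) to (n,n,n) in ℤ³ using positive unit steps such that every visited point (x₁,x₂,x₃) satisfies x₁ ≥ x₂ and x₁ ≥ x₃. -/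
/-- A solid (3D) shape: a finite down-closed subset of `ℕ³`. -/
def DownClosed (S : Finset (ℕ × ℕ × ℕ)) : Prop :=
  ∀ a ∈ S, ∀ b : ℕ × ℕ × ℕ, b.1 ≤ a.1 → b.2.1 ≤ a.2.1 → b.2.2 ≤ a.2.2 → b ∈ S

/-- A corner of a solid shape: a box none of whose three forward neighbors is in `S`. -/
def IsCorner3 (S : Finset (ℕ × ℕ × ℕ)) (c : ℕ × ℕ × ℕ) : Prop :=
  c ∈ S ∧ (c.1 + 1, c.2.1, c.2.2) ∉ S ∧ (c.1, c.2.1 + 1, c.2.2) ∉ S ∧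
    (c.1, c.2.1, c.2.2 + 1) ∉ S

/-- `f` is a solid standard Young tableau of shape `S`: a bijection from the boxes
of `S` to `{1,…,|S|}` (modeled as `Fin S.card`), strictly increasing in each of the
three coordinate directions. -/
def IsSSYT3 (S : Finset (ℕ × ℕ × ℕ)) (f : S → Fin S.card) : Prop :=
  Function.Bijective f ∧
  (∀ a b : S, (↑a : ℕ × ℕ × ℕ).2 = (↑b : ℕ × ℕ × ℕ).2 →
      (↑a : ℕ × ℕ × ℕ).1 < (↑b : ℕ × ℕ × ℕ).1 → f a < f b) ∧
  (∀ a b : S, (↑a : ℕ × ℕ × ℕ).1 = (↑b : ℕ × ℕ × ℕ).1 →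
      (↑a : ℕ × ℕ × ℕ).2.2 = (↑b : ℕ × ℕ × ℕ).2.2 →
      (↑a : ℕ × ℕ × ℕ).2.1 < (↑b : ℕ × ℕ × ℕ).2.1 → f a < f b) ∧
  (∀ a b : S, (↑a : ℕ × ℕ × ℕ).1 = (↑b : ℕ × ℕ × ℕ).1 →
      (↑a : ℕ × ℕ × ℕ).2.1 = (↑b : ℕ × ℕ × ℕ).2.1 →
      (↑a : ℕ × ℕ × ℕ).2.2 < (↑b : ℕ × ℕ × ℕ).2.2 → f a < f b)

/-- The number of solid standard Young tableaux of shape `S`. -/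
noncomputable def ssyt3Count (S : Finset (ℕ × ℕ × ℕ)) : ℕ :=
  Nat.card {f : S → Fin S.card // IsSSYT3 S f}

/-- The cylindrical shape `(2,1) × {1,…,n}`: boxes `(i,j,k)` with `(i,j)` in
the diagram `{(0,0),(0,1),(1,0)}` of the partition `(2,1)` and `k < n`. -/
def cylShape21 (n : ℕ) : Finset (ℕ × ℕ × ℕ) :=
  (Finset.range 2 ×ˢ Finset.range 2 ×ˢ Finset.range n).filter
    (fun p => (p.1, p.2.1) ∈ ({(0, 0), (0, 1), (1, 0)} : Finset (ℕ × ℕ)))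

/-!
Number the three vertical columns of `(2,1) × {1,…,n}` by the cells `(0,0)`, `(0,1)`, `(1,0)`
of the base. A standard filling is then the same as a bijection `g : Fin 3 × Fin n → Fin (3n)`,
and recording for each entry `t` the column containing it gives a word with `n` letters of each
kind; the `k`-th occurrence of letter `c` recovers `g (c, k)`. Monotonicity along the vertical
axis is exactly what makes this a bijection with such words. Monotonicity along the two
horizontal axes says that the `k`-th `0` comes before the `k`-th `1` and the `k`-th `2`, and for
increasing sequences that is equivalent to the prefix counts of `0` dominating those of `1` and
`2`: the lattice path condition `x₁ ≥ x₂`, `x₁ ≥ x₃`.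
-/

open Finset

section ColumnFilling

variable {d n m : ℕ}

lemma cnt_length (w : Fin m → Fin d) (c : Fin d) : cnt w m c = #{t | w t = c} := by
  simp [cnt]

theorem StrictMono.forall_lt_iff_card_le {u v : Fin n → ℕ} (hu : StrictMono u)
    (hv : StrictMono v) (huv : ∀ k, u k ≠ v k) :
    (∀ k, u k < v k) ↔ ∀ i, #{k | v k < i} ≤ #{k | u k < i} := by
  refine ⟨fun h i => card_le_card fun k => ?_, fun h k => ?_⟩
  · simp only [mem_filter, mem_univ, true_and]
    exact (h k).trans
  · by_contra! hle
    have hvu : v k < u k := hle.lt_of_ne' (huv k)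
    have hv_le : k + 1 ≤ #{j | v j < v k + 1} := by
      rw [← Fin.card_Iic]
      exact card_le_card fun j hj => by
        simpa [Nat.lt_succ_iff] using hv.monotone (mem_Iic.mp hj)
    have hu_le : #{j | u j < v k + 1} ≤ k := by
      rw [← Fin.card_Iio]
      exact card_le_card fun j hj => by
        simp only [mem_filter, mem_univ, true_and, Nat.lt_succ_iff] at hj
        exact mem_Iio.mpr (hu.lt_iff_lt.mp (hj.trans_lt hvu))
    have := h (v k + 1)
    omega

structure IsColumnFilling (g : Fin d × Fin n → Fin m) : Prop where
  bijective : Function.Bijective g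
  strictMono_column (c : Fin d) : StrictMono fun k => g (c, k)

lemma isColumnFilling_iff {g : Fin d × Fin n → Fin m} :
    IsColumnFilling g ↔ Function.Bijective g ∧ ∀ c, StrictMono fun k => g (c, k) :=
  ⟨fun h => ⟨h.1, h.2⟩, fun h => ⟨h.1, h.2⟩⟩

namespace IsColumnFilling

variable {g : Fin d × Fin n → Fin m}

noncomputable def toWord (hg : IsColumnFilling g) : Fin m → Fin d :=
  fun t => ((Equiv.ofBijective g hg.bijective).symm t).1

lemma toWord_apply (hg : IsColumnFilling g) (c : Fin d) (k : Fin n) :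
    hg.toWord (g (c, k)) = c := by
  simp [toWord, Equiv.ofBijective_symm_apply_apply]

lemma cnt_toWord (hg : IsColumnFilling g) (i : ℕ) (c : Fin d) :
    cnt hg.toWord i c = #{k | (g (c, k) : ℕ) < i} := by
  rw [cnt, ← card_map ⟨fun k => g (c, k), (hg.strictMono_column c).injective⟩]
  congr 1
  ext t
  obtain ⟨⟨c', k⟩, rfl⟩ := hg.bijective.2 t
  simp only [mem_filter, mem_univ, true_and, toWord_apply hg, mem_map, Function.Embedding.coeFn_mk,
    hg.bijective.1.eq_iff, Prod.mk.injEq, exists_eq_right_right]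
  constructor <;> rintro ⟨h, rfl⟩ <;> exact ⟨h, rfl⟩

lemma cnt_toWord_length (hg : IsColumnFilling g) (c : Fin d) : cnt hg.toWord m c = n := by
  simp [cnt_toWord hg]

lemma forall_lt_iff_cnt_le (hg : IsColumnFilling g) {a b : Fin d} (hab : a ≠ b) :
    (∀ k, g (a, k) < g (b, k)) ↔ ∀ i, cnt hg.toWord i b ≤ cnt hg.toWord i a := by
  simp only [cnt_toWord hg]
  exact StrictMono.forall_lt_iff_card_le (Fin.val_strictMono.comp (hg.strictMono_column a))
    (Fin.val_strictMono.comp (hg.strictMono_column b)) fun k h =>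
      hab (congrArg Prod.fst (hg.bijective.1 (Fin.val_injective h)))

end IsColumnFilling

section OfWord

variable {w : Fin m → Fin d}

lemma card_filter_eq_of_cnt (hw : ∀ c, cnt w m c = n) (c : Fin d) : #{t | w t = c} = n :=
  (cnt_length w c).symm.trans (hw c)

/-- `ofWord w hw (c, k)` is the position of the `k`-th occurrence of the letter `c` in `w`. -/
noncomputable def ofWord (hw : ∀ c, cnt w m c = n) : Fin d × Fin n → Fin m :=
  fun p => ({t | w t = p.1} : Finset _).orderEmbOfFin (card_filter_eq_of_cnt hw p.1) p.2

lemma apply_ofWord (hw : ∀ c, cnt w m c = n) (p : Fin d × Fin n) : w (ofWord hw p) = p.1 :=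
  (mem_filter.mp (orderEmbOfFin_mem _ (card_filter_eq_of_cnt hw p.1) p.2)).2

lemma exists_ofWord_eq (hw : ∀ c, cnt w m c = n) (t : Fin m) : ∃ k, ofWord hw (w t, k) = t := by
  have : t ∈ Set.range (({t' | w t' = w t} : Finset _).orderEmbOfFin
      (card_filter_eq_of_cnt hw (w t))) := by
    simp [range_orderEmbOfFin]
  exact this

lemma isColumnFilling_ofWord (hw : ∀ c, cnt w m c = n) : IsColumnFilling (ofWord hw) where
  bijective := by
    refine ⟨fun p q hpq => ?_, fun t => ⟨_, (exists_ofWord_eq hw t).choose_spec⟩⟩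
    have hc : p.1 = q.1 := by rw [← apply_ofWord hw p, ← apply_ofWord hw q, hpq]
    obtain ⟨c, k⟩ := p
    obtain ⟨c', k'⟩ := q
    obtain rfl : c = c' := hc
    have : k = k' := (orderEmbOfFin _ (card_filter_eq_of_cnt hw c)).injective hpq
    rw [this]
  strictMono_column c := (orderEmbOfFin _ (card_filter_eq_of_cnt hw c)).strictMono

lemma toWord_ofWord (hw : ∀ c, cnt w m c = n) : (isColumnFilling_ofWord hw).toWord = w := by
  funext t
  obtain ⟨k, hk⟩ := exists_ofWord_eq hw t
  calc (isColumnFilling_ofWord hw).toWord t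
      = (isColumnFilling_ofWord hw).toWord (ofWord hw (w t, k)) := by rw [hk]
    _ = w t := IsColumnFilling.toWord_apply _ _ _

end OfWord

lemma IsColumnFilling.ofWord_toWord {g : Fin d × Fin n → Fin m} (hg : IsColumnFilling g) :
    ofWord hg.cnt_toWord_length = g := by
  funext ⟨c, k⟩
  refine congrFun (orderEmbOfFin_unique _ (fun k => ?_) (hg.strictMono_column c)).symm k
  simp [hg.toWord_apply]

noncomputable def columnFillingEquivWord :
    {g : Fin d × Fin n → Fin m // IsColumnFilling g} ≃
      {w : Fin m → Fin d // ∀ c, cnt w m c = n} where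
  toFun g := ⟨g.2.toWord, g.2.cnt_toWord_length⟩
  invFun w := ⟨ofWord w.2, isColumnFilling_ofWord w.2⟩
  left_inv g := Subtype.ext g.2.ofWord_toWord
  right_inv w := Subtype.ext (toWord_ofWord w.2)

lemma card_columnFilling_eq_card_word {P : (Fin d × Fin n → Fin m) → Prop}
    {Q : (Fin m → Fin d) → Prop} (h : ∀ g (hg : IsColumnFilling g), P g ↔ Q hg.toWord) :
    Nat.card {g // IsColumnFilling g ∧ P g} = Nat.card {w // (∀ c, cnt w m c = n) ∧ Q w} :=
  Nat.card_congr <| (Equiv.subtypeSubtypeEquivSubtypeInter _ _).symm.trans <|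
    (columnFillingEquivWord.subtypeEquiv fun g => h g.1 g.2).trans
      (Equiv.subtypeSubtypeEquivSubtypeInter _ _)

end ColumnFilling

section Cylinder

variable {n : ℕ}

def cell21 : Fin 3 → ℕ × ℕ := ![(0, 0), (0, 1), (1, 0)]

def cylBox (c : Fin 3) (k : ℕ) : ℕ × ℕ × ℕ := ((cell21 c).1, (cell21 c).2, k)

lemma cylBox_inj {c c' : Fin 3} {k k' : ℕ} : cylBox c k = cylBox c' k' ↔ c = c' ∧ k = k' := by
  fin_cases c <;> fin_cases c' <;> simp [cylBox, cell21]

lemma mem_cylShape21 {x : ℕ × ℕ × ℕ} : x ∈ cylShape21 n ↔ ∃ c k, k < n ∧ cylBox c k = x := by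
  obtain ⟨a, b, k⟩ := x
  simp [cylShape21, cylBox, cell21, Fin.exists_fin_succ]
  omega

noncomputable def cylShape21Equiv (n : ℕ) : Fin 3 × Fin n ≃ cylShape21 n :=
  Equiv.ofBijective (fun p => ⟨cylBox p.1 p.2, mem_cylShape21.mpr ⟨p.1, p.2, p.2.2, rfl⟩⟩)
    ⟨fun p q h => by
      obtain ⟨hc, hk⟩ := cylBox_inj.mp (congrArg Subtype.val h)
      exact Prod.ext hc (Fin.ext hk),
    fun x => by
      obtain ⟨c, k, hk, hx⟩ := mem_cylShape21.mp x.2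
      exact ⟨(c, ⟨k, hk⟩), Subtype.ext hx⟩⟩

lemma card_cylShape21 (n : ℕ) : #(cylShape21 n) = 3 * n := by
  rw [← Fintype.card_coe, ← Fintype.card_congr (cylShape21Equiv n)]
  simp

noncomputable def cylShape21ArrowEquiv (n : ℕ) :
    (cylShape21 n → Fin #(cylShape21 n)) ≃ (Fin 3 × Fin n → Fin (3 * n)) :=
  (cylShape21Equiv n).symm.arrowCongr (finCongr (card_cylShape21 n))

lemma cylShape21ArrowEquiv_lt_iff (f : cylShape21 n → Fin #(cylShape21 n)) (p q : Fin 3 × Fin n) :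
    cylShape21ArrowEquiv n f p < cylShape21ArrowEquiv n f q ↔
      f (cylShape21Equiv n p) < f (cylShape21Equiv n q) := by
  simp [cylShape21ArrowEquiv]

lemma coe_cylShape21Equiv (p : Fin 3 × Fin n) :
    (cylShape21Equiv n p : ℕ × ℕ × ℕ) = cylBox p.1 p.2 := rfl

lemma isSSYT3_cylShape21_iff (f : cylShape21 n → Fin #(cylShape21 n)) :
    IsSSYT3 (cylShape21 n) f ↔ IsColumnFilling (cylShape21ArrowEquiv n f) ∧
      ∀ k, cylShape21ArrowEquiv n f (0, k) < cylShape21ArrowEquiv n f (1, k) ∧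
        cylShape21ArrowEquiv n f (0, k) < cylShape21ArrowEquiv n f (2, k) := by
  have hbij : Function.Bijective f ↔ Function.Bijective (cylShape21ArrowEquiv n f) := by
    change _ ↔ Function.Bijective (finCongr (card_cylShape21 n) ∘ f ∘ cylShape21Equiv n)
    rw [Equiv.comp_bijective, Equiv.bijective_comp]
  simp only [IsSSYT3, hbij, isColumnFilling_iff, and_assoc,
    (cylShape21Equiv n).symm.forall_congr_left,
    Equiv.symm_symm, coe_cylShape21Equiv, ← cylShape21ArrowEquiv_lt_iff, Prod.forall]
  refine and_congr_right fun _ => ?_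
  simp [Fin.forall_fin_succ, cylBox, cell21, Fin.val_inj, StrictMono, forall_and]
  tauto

lemma ssyt3Count_cylShape21 (n : ℕ) :
    ssyt3Count (cylShape21 n) = Nat.card {g : Fin 3 × Fin n → Fin (3 * n) //
      IsColumnFilling g ∧ ∀ k, g (0, k) < g (1, k) ∧ g (0, k) < g (2, k)} :=
  Nat.card_congr ((cylShape21ArrowEquiv n).subtypeEquiv isSSYT3_cylShape21_iff)

end Cylinder

/-- The number of solid standard Young tableaux of shape `(2,1) × {1,…,n}`
equals the number of lattice paths from `(0,0,0)` to `(n,n,n)` with positive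
unit steps whose every visited point `(x₁,x₂,x₃)` satisfies `x₁ ≥ x₂` and
`x₁ ≥ x₃`. -/
theorem ssyt3_cyl21_eq_lattice_paths (n : ℕ) :
    ssyt3Count (cylShape21 n) =
      Nat.card {w : Fin (3 * n) → Fin 3 //
        (∀ i : ℕ, cnt w i 1 ≤ cnt w i 0 ∧ cnt w i 2 ≤ cnt w i 0) ∧
        (∀ j : Fin 3, cnt w (3 * n) j = n)} := by
  rw [ssyt3Count_cylShape21]
  refine (card_columnFilling_eq_card_word fun g hg => ?_).trans
    (Nat.card_congr (Equiv.subtypeEquivRight fun _ => and_comm))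
  simp only [forall_and, hg.forall_lt_iff_cnt_le (by decide : (0 : Fin 3) ≠ 1),
    hg.forall_lt_iff_cnt_le (by decide : (0 : Fin 3) ≠ 2)]
end

section
/- The number of solid standard Young tableaux of the cylindrical shape (2,1,1)×{1,...,n} equals the number of lattice paths from (0,0,0,0) to (n,n,n,n) in ℤ⁴ using positive unit steps such that every visited point (x₁,x₂,x₃,x₄) satisfies x₁ ≥ x₂ ≥ x₃ and x₁ ≥ x₄. -/
/-- The cylindrical shape `(2,1,1) × {1,…,n}`: boxes `(i,j,k)` with `(i,j)` in
the diagram `{(0,0),(0,1),(1,0),(2,0)}` of the partition `(2,1,1)` and `k < n`. -/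
def cylShape211 (n : ℕ) : Finset (ℕ × ℕ × ℕ) :=
  (Finset.range 3 ×ˢ Finset.range 2 ×ˢ Finset.range n).filter
    (fun p => (p.1, p.2.1) ∈ ({(0, 0), (0, 1), (1, 0), (2, 0)} : Finset (ℕ × ℕ)))

/-!
Index the boxes of `(2,1,1) × {1,…,n}` by pairs `(c, k)` of a cell `c` of the diagram and a level
`k < n`. Reading the labels `1, …, 4n` of a tableau in increasing order and stepping in direction `c`
whenever the label lies in row `c` gives a word with `n` copies of each letter, whose `c`-th
coordinate after `i` steps counts the labels below `i` in row `c`. As labels increase along each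
row, the `k`-th occurrence of `c` marks the label of `(c, k)`, so this is a bijection between
row-increasing labelings and such words. Under it, `T (c, k) < T (c', k)` at every level `k` says
exactly that the `c'`-th coordinate never exceeds the `c`-th one, and for the cells of `(2,1,1)`
these comparisons are `x₁ ≥ x₂ ≥ x₃` and `x₁ ≥ x₄`.
-/

open Finset

section Words

variable {m d n : ℕ}

lemma cnt_mono (w : Fin m → Fin d) (c : Fin d) : Monotone fun i => cnt w i c :=
  fun _ _ h => card_le_card <| monotone_filter_right _ fun _ _ ht => ⟨ht.1.trans_le h, ht.2⟩

lemma cnt_succ (w : Fin m → Fin d) (t : Fin m) (c : Fin d) :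
    cnt w (t + 1) c = cnt w t c + if w t = c then 1 else 0 := by
  have hsplit : univ.filter (fun s : Fin m => (s : ℕ) < t + 1 ∧ w s = c) =
      univ.filter (fun s : Fin m => (s : ℕ) < t ∧ w s = c) ∪
        univ.filter (fun s : Fin m => s = t ∧ w s = c) := by
    ext s
    simp only [mem_union, mem_filter, mem_univ, true_and, Nat.lt_succ_iff_lt_or_eq, Fin.ext_iff]
    tauto
  rw [cnt, cnt, hsplit, card_union_of_disjoint]
  · split_ifs with h <;> simp [filter_and, h, filter_eq']
  · exact disjoint_filter.2 fun s _ hs ht => (Fin.ext_iff.not.2 hs.1.ne) ht.1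

lemma cnt_lt_cnt_succ (w : Fin m → Fin d) (t : Fin m) : cnt w t (w t) < cnt w (t + 1) (w t) := by
  simp [cnt_succ]

lemma lt_of_cnt_lt_cnt (w : Fin m → Fin d) {i i' : ℕ} {c : Fin d}
    (h : cnt w i c < cnt w i' c) : i < i' :=
  lt_of_not_ge fun h' => (cnt_mono w c h').not_gt h

def labelingWord (e : Fin d × Fin n ≃ Fin m) : Fin m → Fin d := fun t => (e.symm t).1

lemma labelingWord_apply (e : Fin d × Fin n ≃ Fin m) (x : Fin d × Fin n) :
    labelingWord e (e x) = x.1 := by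
  simp [labelingWord]

lemma cnt_labelingWord (e : Fin d × Fin n ≃ Fin m) (i : ℕ) (c : Fin d) :
    cnt (labelingWord e) i c = #{k | (e (c, k) : ℕ) < i} := by
  rw [cnt, eq_comm]
  refine card_bij' (fun k _ => e (c, k)) (fun t _ => (e.symm t).2) (fun k hk => ?_)
    (fun t ht => ?_) (fun k _ => by simp) (fun t ht => ?_)
  all_goals rw [mem_filter] at *
  · simpa [labelingWord_apply] using hk
  · rw [← ht.2.2]
    simpa [labelingWord] using ht.2.1
  · rw [← ht.2.2]
    simp [labelingWord]

lemma cnt_labelingWord_total (e : Fin d × Fin n ≃ Fin m) (c : Fin d) :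
    cnt (labelingWord e) m c = n := by
  simp [cnt_labelingWord]

lemma cnt_labelingWord_of_strictMono {e : Fin d × Fin n ≃ Fin m}
    (he : ∀ c, StrictMono fun k => e (c, k)) (c : Fin d) (k : Fin n) :
    cnt (labelingWord e) (e (c, k)) c = k := by
  rw [cnt_labelingWord]
  simp_rw [← Fin.lt_def, (he c).lt_iff_lt]
  rw [filter_gt_eq_Iio, Fin.card_Iio]

section Balanced

variable {w : Fin m → Fin d}

lemma cnt_apply_lt (hw : ∀ j, cnt w m j = n) (t : Fin m) : cnt w t (w t) < n :=
  calc cnt w t (w t) < cnt w (t + 1) (w t) := cnt_lt_cnt_succ w t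
    _ ≤ cnt w m (w t) := cnt_mono w _ t.isLt
    _ = n := hw _

lemma eq_of_cnt_apply_eq {t t' : Fin m} (hw : w t = w t')
    (hcnt : cnt w t (w t) = cnt w t' (w t')) : t = t' := by
  by_contra hne
  wlog hlt : t < t' generalizing t t'
  · exact this hw.symm hcnt.symm (Ne.symm hne) ((Ne.symm hne).lt_of_le (not_lt.1 hlt))
  have := (cnt_lt_cnt_succ w t).trans_le (cnt_mono w (w t) (Nat.succ_le_of_lt hlt))
  rw [hcnt, hw] at this
  exact this.false

noncomputable def positionEquiv (hm : d * n = m) (hw : ∀ j, cnt w m j = n) :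
    Fin m ≃ Fin d × Fin n :=
  Equiv.ofBijective (fun t => (w t, ⟨cnt w t (w t), cnt_apply_lt hw t⟩)) <| by
    refine (Fintype.bijective_iff_injective_and_card _).2 ⟨fun t t' h => ?_, by simp [hm]⟩
    simp only [Prod.mk.injEq, Fin.mk.injEq] at h
    exact eq_of_cnt_apply_eq h.1 h.2

lemma positionEquiv_apply (hm : d * n = m) (hw : ∀ j, cnt w m j = n) (t : Fin m) :
    positionEquiv hm hw t = (w t, ⟨cnt w t (w t), cnt_apply_lt hw t⟩) :=
  rfl

lemma positionEquiv_symm_spec (hm : d * n = m) (hw : ∀ j, cnt w m j = n) (c : Fin d)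
    (k : Fin n) :
    w ((positionEquiv hm hw).symm (c, k)) = c ∧
      cnt w ((positionEquiv hm hw).symm (c, k)) c = k := by
  have h := (positionEquiv hm hw).apply_symm_apply (c, k)
  rw [positionEquiv_apply, Prod.mk.injEq] at h
  obtain ⟨hc, hk⟩ := h
  have hk' := congrArg Fin.val hk
  rw [Fin.val_mk, hc] at hk'
  exact ⟨hc, hk'⟩

lemma strictMono_positionEquiv_symm (hm : d * n = m) (hw : ∀ j, cnt w m j = n) (c : Fin d) :
    StrictMono fun k => (positionEquiv hm hw).symm (c, k) := by
  intro k k' hk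
  apply lt_of_cnt_lt_cnt w (c := c)
  rwa [(positionEquiv_symm_spec hm hw c k).2, (positionEquiv_symm_spec hm hw c k').2]

end Balanced

lemma positionEquiv_labelingWord {e : Fin d × Fin n ≃ Fin m}
    (he : ∀ c, StrictMono fun k => e (c, k)) (hm : d * n = m)
    (hw : ∀ j, cnt (labelingWord e) m j = n) :
    positionEquiv hm hw = e.symm := by
  ext1 t
  obtain ⟨⟨c, k⟩, rfl⟩ := e.surjective t
  simp [positionEquiv_apply, labelingWord_apply, cnt_labelingWord_of_strictMono he]

noncomputable def rowStrictLabelingEquiv (hm : d * n = m) :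
    {e : Fin d × Fin n ≃ Fin m // ∀ c, StrictMono fun k => e (c, k)} ≃
      {w : Fin m → Fin d // ∀ j, cnt w m j = n} where
  toFun e := ⟨labelingWord e.1, cnt_labelingWord_total e.1⟩
  invFun w := ⟨(positionEquiv hm w.2).symm, strictMono_positionEquiv_symm hm w.2⟩
  left_inv e := Subtype.ext <| by
    dsimp only
    rw [positionEquiv_labelingWord e.2, Equiv.symm_symm]
  right_inv _ := rfl

lemma forall_lt_iff_forall_cnt_le {e : Fin d × Fin n ≃ Fin m}
    (he : ∀ c, StrictMono fun k => e (c, k)) {c c' : Fin d} (hcc' : c ≠ c') :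
    (∀ k, e (c, k) < e (c', k)) ↔ ∀ i, cnt (labelingWord e) i c' ≤ cnt (labelingWord e) i c := by
  refine ⟨fun h i => ?_, fun h k => ?_⟩
  · simp only [cnt_labelingWord]
    exact card_le_card <| monotone_filter_right _ fun k _ hk => (Fin.lt_def.1 (h k)).trans hk
  · have hsucc : cnt (labelingWord e) (e (c', k) + 1) c' = k + 1 := by
      rw [cnt_succ, labelingWord_apply, cnt_labelingWord_of_strictMono he, if_pos rfl]
    have hk : cnt (labelingWord e) (e (c, k)) c < cnt (labelingWord e) (e (c', k) + 1) c := by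
      rw [cnt_labelingWord_of_strictMono he, Nat.lt_iff_add_one_le, ← hsucc]
      exact h _
    have hle : e (c, k) ≤ e (c', k) :=
      Fin.le_def.2 <| Nat.lt_succ_iff.1 <| lt_of_cnt_lt_cnt (labelingWord e) hk
    exact hle.lt_of_ne fun heq => hcc' (congrArg Prod.fst (e.injective heq))

def IsRowColStrict {L : Type*} [Preorder L] (R : Fin d → Fin d → Prop) (g : Fin d × Fin n → L) :
    Prop :=
  (∀ c, StrictMono fun k => g (c, k)) ∧ ∀ c c', R c c' → ∀ k, g (c, k) < g (c', k)

theorem card_isRowColStrict_eq_card_ballot (hm : d * n = m) (R : Fin d → Fin d → Prop)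
    (hR : ∀ c c', R c c' → c ≠ c') :
    Nat.card {e : Fin d × Fin n ≃ Fin m // IsRowColStrict R e} =
      Nat.card {w : Fin m → Fin d //
        (∀ c c', R c c' → ∀ i, cnt w i c' ≤ cnt w i c) ∧ ∀ j, cnt w m j = n} :=
  Nat.card_congr <| (Equiv.subtypeSubtypeEquivSubtypeInter _ _).symm.trans <|
    (Equiv.subtypeEquiv (rowStrictLabelingEquiv hm) fun e => forall₂_congr fun c c' =>
      forall_congr' fun hr => forall_lt_iff_forall_cnt_le e.2 (hR c c' hr)).trans <|
    (Equiv.subtypeSubtypeEquivSubtypeInter _ _).trans <| Equiv.subtypeEquivRight fun _ => and_comm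

end Words

section Shape

/-- Cell `c` of the diagram of `(2,1,1)` carries coordinate `x_{c+1}` of the lattice path. -/
def cell211 : Fin 4 → ℕ × ℕ := ![(0, 0), (1, 0), (2, 0), (0, 1)]

lemma cell211_injective : Function.Injective cell211 := by
  decide

lemma cell211_lt_iff (c c' : Fin 4) :
    cell211 c < cell211 c' ↔
      (cell211 c).2 = (cell211 c').2 ∧ (cell211 c).1 < (cell211 c').1 ∨
        (cell211 c).1 = (cell211 c').1 ∧ (cell211 c).2 < (cell211 c').2 := by
  rw [Prod.lt_iff]
  revert c c'
  decide

lemma cell211_ballot_iff {m : ℕ} (w : Fin m → Fin 4) :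
    (∀ c c', cell211 c < cell211 c' → ∀ i, cnt w i c' ≤ cnt w i c) ↔
      ∀ i, cnt w i 1 ≤ cnt w i 0 ∧ cnt w i 2 ≤ cnt w i 1 ∧ cnt w i 3 ≤ cnt w i 0 := by
  refine ⟨fun h i => ⟨h 0 1 ?_ i, h 1 2 ?_ i, h 0 3 ?_ i⟩, fun h c c' hcc' i => ?_⟩
  any_goals simp [cell211, Prod.lt_iff]
  obtain ⟨h₁, h₂, h₃⟩ := h i
  fin_cases c <;> fin_cases c' <;> simp [cell211, Prod.lt_iff] at hcc' ⊢ <;> omega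

variable {n : ℕ}

lemma mem_cylShape211 {p : ℕ × ℕ × ℕ} :
    p ∈ cylShape211 n ↔ (p.1, p.2.1) ∈ Set.range cell211 ∧ p.2.2 < n := by
  obtain ⟨i, j, k⟩ := p
  simp [cylShape211, cell211]
  omega

variable (n) in
noncomputable def cellEquiv211 : Fin 4 × Fin n ≃ cylShape211 n :=
  Equiv.ofBijective
    (fun x => ⟨((cell211 x.1).1, (cell211 x.1).2, x.2), mem_cylShape211.2 ⟨⟨x.1, rfl⟩, x.2.isLt⟩⟩)
    ⟨fun x y h => by
      simp only [Subtype.mk.injEq, Prod.mk.injEq] at h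
      exact Prod.ext (cell211_injective (Prod.ext h.1 h.2.1)) (Fin.ext h.2.2),
    fun p => by
      obtain ⟨⟨c, hc⟩, hk⟩ := mem_cylShape211.1 p.2
      exact ⟨(c, ⟨_, hk⟩), Subtype.ext (by simp [hc])⟩⟩

lemma coe_cellEquiv211 (x : Fin 4 × Fin n) :
    (cellEquiv211 n x : ℕ × ℕ × ℕ) = ((cell211 x.1).1, (cell211 x.1).2, (x.2 : ℕ)) :=
  rfl

lemma card_cylShape211 : (cylShape211 n).card = 4 * n := by
  simpa using (Fintype.card_congr (cellEquiv211 n)).symm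

lemma isSSYT3_cylShape211_iff (f : cylShape211 n → Fin (cylShape211 n).card) :
    IsSSYT3 (cylShape211 n) f ↔ Function.Bijective (f ∘ cellEquiv211 n) ∧
      IsRowColStrict (fun c c' => cell211 c < cell211 c') (f ∘ cellEquiv211 n) := by
  rw [IsSSYT3, IsRowColStrict, (cellEquiv211 n).bijective_comp]
  simp only [← (cellEquiv211 n).forall_congr_right, coe_cellEquiv211, Prod.mk.injEq, Prod.forall]
  refine and_congr_right' ⟨fun ⟨h₁, h₂, h₃⟩ => ⟨fun c k k' hk => h₃ c k c k' rfl rfl hk, ?_⟩,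
    fun ⟨hrow, hcol⟩ => ⟨?_, ?_, ?_⟩⟩
  · intro c c' hcc' k
    rcases (cell211_lt_iff c c').1 hcc' with ⟨h, h'⟩ | ⟨h, h'⟩
    exacts [h₁ c k c' k ⟨h, rfl⟩ h', h₂ c k c' k h rfl h']
  · rintro c k c' k' ⟨h, hk⟩ h'
    obtain rfl := Fin.ext hk
    exact hcol c c' ((cell211_lt_iff c c').2 (Or.inl ⟨h, h'⟩)) k
  · rintro c k c' k' h hk h'
    obtain rfl := Fin.ext hk
    exact hcol c c' ((cell211_lt_iff c c').2 (Or.inr ⟨h, h'⟩)) k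
  · rintro c k c' k' h₁ h₂ hk
    obtain rfl := cell211_injective (Prod.ext h₁ h₂)
    exact hrow c hk

lemma ssyt3Count_cylShape211 :
    ssyt3Count (cylShape211 n) = Nat.card {e : Fin 4 × Fin n ≃ Fin (cylShape211 n).card //
      IsRowColStrict (fun c c' => cell211 c < cell211 c') e} :=
  Nat.card_congr <|
    (Equiv.subtypeEquiv (Equiv.arrowCongr (cellEquiv211 n).symm (Equiv.refl _))
      (q := fun g => Function.Bijective g ∧ IsRowColStrict _ g) isSSYT3_cylShape211_iff).trans <|
    (Equiv.subtypeSubtypeEquivSubtypeInter _ _).symm.trans <|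
      Equiv.subtypeEquiv Equiv.bijectiveEquiv fun _ => Iff.rfl

end Shape

/-- The number of solid standard Young tableaux of shape `(2,1,1) × {1,…,n}`
equals the number of lattice paths from `(0,0,0,0)` to `(n,n,n,n)` with
positive unit steps whose every visited point `(x₁,x₂,x₃,x₄)` satisfies
`x₁ ≥ x₂ ≥ x₃` and `x₁ ≥ x₄`. -/
theorem ssyt3_cyl211_eq_lattice_paths (n : ℕ) :
    ssyt3Count (cylShape211 n) =
      Nat.card {w : Fin (4 * n) → Fin 4 //
        (∀ i : ℕ, cnt w i 1 ≤ cnt w i 0 ∧ cnt w i 2 ≤ cnt w i 1 ∧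
          cnt w i 3 ≤ cnt w i 0) ∧
        (∀ j : Fin 4, cnt w (4 * n) j = n)} := by
  rw [ssyt3Count_cylShape211, card_isRowColStrict_eq_card_ballot card_cylShape211.symm _
    fun c c' h => ne_of_apply_ne cell211 h.ne, card_cylShape211]
  exact Nat.card_congr (Equiv.subtypeEquivRight fun w => and_congr_left' (cell211_ballot_iff w))
end
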